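/- Every real invertible n×n matrix g with positive determinant admits a unique decomposition g = n·a·k, where n is unit upper triangular, a is diagonal with strictly positive diagonal entries, and k ∈ SO(n) (Iwasawa/QR decomposition); restricted to SL(n,ℝ), det a = 1. -/

import Mathlib

/-!
Gram–Schmidt, run on the rows of `g` from the last one to the first, writes `g = R * K` with `R`
upper triangular with positive diagonal and `K` orthogonal; then `R = N * diag R` with `N` unit
upper triangular, and `det K = det g / det R > 0` puts `K` in `SO(n)`. For uniqueness, if
`R₁ * K₁ = R₂ * K₂` then `M = R₂⁻¹ * R₁ = K₂ * K₁ᵀ` is upper triangular with positive diagonal and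
orthogonal; `Mᵀ = M⁻¹` is then upper triangular too, so `M` is diagonal with entries `±1`, i.e.
`M = 1`. On `SL(n, ℝ)`, `det a = det g = 1` because `det n = det k = 1`.
-/

open Matrix InnerProductSpace Finset

section GramSchmidt

variable {𝕜 E ι : Type*} [RCLike 𝕜] [NormedAddCommGroup E] [InnerProductSpace 𝕜 E]
  [LinearOrder ι] [LocallyFiniteOrderBot ι] [WellFoundedLT ι]

theorem inner_gramSchmidt_self (f : ι → E) (i : ι) :
    inner 𝕜 (gramSchmidt 𝕜 f i) (f i) = (‖gramSchmidt 𝕜 f i‖ : 𝕜) ^ 2 := by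
  rw [gramSchmidt_def'' 𝕜 f i, inner_add_right, inner_sum, sum_eq_zero, add_zero,
    inner_self_eq_norm_sq_to_K]
  intro j hj
  rw [inner_smul_right, gramSchmidt_orthogonal 𝕜 f (mem_Iio.1 hj).ne', mul_zero]

end GramSchmidt

theorem inner_gramSchmidtNormed_self_pos {E ι : Type*} [NormedAddCommGroup E]
    [InnerProductSpace ℝ E] [LinearOrder ι] [LocallyFiniteOrderBot ι] [WellFoundedLT ι]
    {f : ι → E} (hf : LinearIndependent ℝ f) (i : ι) :
    0 < inner ℝ (gramSchmidtNormed ℝ f i) (f i) := by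
  have hpos : 0 < ‖gramSchmidt ℝ f i‖ := norm_pos_iff.2 (gramSchmidt_ne_zero i hf)
  rw [gramSchmidtNormed, real_inner_smul_left, inner_gramSchmidt_self]
  simp only [RCLike.ofReal_real_eq_id, id]
  field_simp
  exact hpos

namespace Matrix

variable {ι α : Type*} [LinearOrder ι]

theorem IsDiag.isUpperTriangular [Zero α] {A : Matrix ι ι α} (hA : A.IsDiag) :
    A.IsUpperTriangular :=
  fun _ _ h => hA h.ne'

variable [Fintype ι]

theorem IsUpperTriangular.mul_apply_self [NonUnitalNonAssocSemiring α] {M N : Matrix ι ι α}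
    (hM : M.IsUpperTriangular) (hN : N.IsUpperTriangular) (i : ι) :
    (M * N) i i = M i i * N i i := by
  rw [mul_apply]
  refine sum_eq_single i (fun k _ hk => ?_) (by simp)
  rcases hk.lt_or_gt with h | h
  · rw [hM h, zero_mul]
  · rw [hN h, mul_zero]

theorem det_eq_one_of_transpose_mul_self_eq_one [CommRing α] [LinearOrder α]
    [IsStrictOrderedRing α] {K : Matrix ι ι α} (hK : Kᵀ * K = 1) (hpos : 0 < K.det) :
    K.det = 1 := by
  have hsq := congrArg det hK
  rw [det_mul, det_transpose, det_one] at hsq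
  exact (mul_self_eq_one_iff.1 hsq).resolve_right (by linarith)

section Field

variable [Field α]

theorem IsUpperTriangular.exists_unitriangular_mul_diagonal {R : Matrix ι ι α}
    (hR : R.IsUpperTriangular) (hR_ne : ∀ i, R i i ≠ 0) :
    ∃ N : Matrix ι ι α, (N.IsUpperTriangular ∧ ∀ i, N i i = 1) ∧ R = N * diagonal R.diag := by
  refine ⟨R * diagonal fun i => (R i i)⁻¹, ⟨fun i j h => ?_, fun i => ?_⟩, ?_⟩
  · rw [mul_diagonal, hR h, zero_mul]
  · rw [mul_diagonal, mul_inv_cancel₀ (hR_ne i)]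
  · rw [Matrix.mul_assoc, diagonal_mul_diagonal]
    conv_lhs => rw [← Matrix.mul_one R, ← diagonal_one]
    congr 2
    funext i
    exact (inv_mul_cancel₀ (hR_ne i)).symm

theorem eq_of_unitriangular_mul_diagonal_eq {N₁ N₂ A₁ A₂ : Matrix ι ι α}
    (hN₁ : N₁.IsUpperTriangular ∧ ∀ i, N₁ i i = 1) (hN₂ : N₂.IsUpperTriangular ∧ ∀ i, N₂ i i = 1)
    (hA₁ : A₁.IsDiag) (hA₂ : A₂.IsDiag) (hA₁_ne : ∀ i, A₁ i i ≠ 0) (h : N₁ * A₁ = N₂ * A₂) :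
    N₁ = N₂ ∧ A₁ = A₂ := by
  have hdiag : A₁.diag = A₂.diag := funext fun i => by
    simpa [hN₁.1.mul_apply_self hA₁.isUpperTriangular, hN₂.1.mul_apply_self hA₂.isUpperTriangular,
      hN₁.2, hN₂.2] using congrFun (congrFun h i) i
  have hA : A₁ = A₂ := by rw [← hA₁.diagonal_diag, ← hA₂.diagonal_diag, hdiag]
  subst hA
  have hunit : IsUnit A₁ := by
    rw [← hA₁.diagonal_diag]
    exact isUnit_diagonal.2 (Pi.isUnit_iff.2 fun i => (hA₁_ne i).isUnit)
  exact ⟨hunit.mul_right_cancel h, rfl⟩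

variable [LinearOrder α] [IsStrictOrderedRing α]

theorem IsUpperTriangular.isUnit_of_diag_pos {R : Matrix ι ι α} (hR : R.IsUpperTriangular)
    (hpos : ∀ i, 0 < R i i) : IsUnit R := by
  rw [isUnit_iff_isUnit_det, det_of_isUpperTriangular hR]
  exact (prod_pos fun i _ => hpos i).ne'.isUnit

theorem eq_one_of_isUpperTriangular_of_transpose_mul_self_eq_one {M : Matrix ι ι α}
    (hM : M.IsUpperTriangular) (hpos : ∀ i, 0 < M i i) (hMM : Mᵀ * M = 1) : M = 1 := by
  have : Invertible M := invertibleOfLeftInverse _ _ hMM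
  have hlower : (Mᵀ).IsUpperTriangular :=
    inv_eq_left_inv hMM ▸ blockTriangular_inv_of_blockTriangular hM
  have hdiag : M.IsDiag := fun i j hij =>
    hij.lt_or_gt.elim (fun h => by simpa using hlower h) (fun h => hM h)
  have hsq : ∀ i, M i i * M i i = 1 := fun i => by
    simpa [hlower.mul_apply_self hM] using congrFun (congrFun hMM i) i
  ext i j
  rcases eq_or_ne i j with rfl | hij
  · simp [(mul_self_eq_one_iff.1 (hsq i)).resolve_right (by linarith [hpos i])]
  · simp [hdiag hij, hij]

theorem eq_of_upperTriangular_mul_orthogonal_eq {R₁ R₂ K₁ K₂ : Matrix ι ι α}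
    (hR₁ : R₁.IsUpperTriangular) (hR₁_pos : ∀ i, 0 < R₁ i i)
    (hR₂ : R₂.IsUpperTriangular) (hR₂_pos : ∀ i, 0 < R₂ i i)
    (hK₁ : K₁ᵀ * K₁ = 1) (hK₂ : K₂ᵀ * K₂ = 1) (h : R₁ * K₁ = R₂ * K₂) :
    R₁ = R₂ ∧ K₁ = K₂ := by
  have hK₁' : K₁ * K₁ᵀ = 1 := mul_eq_one_comm.1 hK₁
  set M := K₂ * K₁ᵀ
  have hR₁M : R₁ = R₂ * M := by rw [← Matrix.mul_assoc, ← h, Matrix.mul_assoc, hK₁', mul_one]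
  have : Invertible R₂ := (hR₂.isUnit_of_diag_pos hR₂_pos).invertible
  have hM : M.IsUpperTriangular := by
    rw [show M = R₂⁻¹ * R₁ by rw [hR₁M, inv_mul_cancel_left_of_invertible]]
    exact (blockTriangular_inv_of_blockTriangular hR₂).mul hR₁
  have hM_pos : ∀ i, 0 < M i i := fun i =>
    pos_of_mul_pos_right (hR₂.mul_apply_self hM i ▸ hR₁M ▸ hR₁_pos i) (hR₂_pos i).le
  have hMM : Mᵀ * M = 1 := by
    rw [transpose_mul, transpose_transpose, Matrix.mul_assoc, ← Matrix.mul_assoc K₂ᵀ, hK₂,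
      Matrix.one_mul, hK₁']
  have hM1 := eq_one_of_isUpperTriangular_of_transpose_mul_self_eq_one hM hM_pos hMM
  refine ⟨by rw [hR₁M, hM1, mul_one], ?_⟩
  rw [← Matrix.one_mul K₁, ← hM1, Matrix.mul_assoc, hK₁, mul_one]

theorem iwasawa_decomposition_unique {N₁ A₁ K₁ N₂ A₂ K₂ : Matrix ι ι α}
    (hN₁ : N₁.IsUpperTriangular ∧ ∀ i, N₁ i i = 1) (hA₁ : A₁.IsDiag ∧ ∀ i, 0 < A₁ i i)
    (hK₁ : K₁ᵀ * K₁ = 1)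
    (hN₂ : N₂.IsUpperTriangular ∧ ∀ i, N₂ i i = 1) (hA₂ : A₂.IsDiag ∧ ∀ i, 0 < A₂ i i)
    (hK₂ : K₂ᵀ * K₂ = 1) (h : N₁ * A₁ * K₁ = N₂ * A₂ * K₂) :
    N₁ = N₂ ∧ A₁ = A₂ ∧ K₁ = K₂ := by
  have hNA : ∀ {N A : Matrix ι ι α}, N.IsUpperTriangular ∧ (∀ i, N i i = 1) →
      A.IsDiag ∧ (∀ i, 0 < A i i) → (N * A).IsUpperTriangular ∧ ∀ i, 0 < (N * A) i i :=
    fun hN hA => ⟨hN.1.mul hA.1.isUpperTriangular, fun i => by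
      rw [hN.1.mul_apply_self hA.1.isUpperTriangular, hN.2, one_mul]; exact hA.2 i⟩
  obtain ⟨hR, rfl⟩ := eq_of_upperTriangular_mul_orthogonal_eq (hNA hN₁ hA₁).1 (hNA hN₁ hA₁).2
    (hNA hN₂ hA₂).1 (hNA hN₂ hA₂).2 hK₁ hK₂ h
  obtain ⟨rfl, rfl⟩ := eq_of_unitriangular_mul_diagonal_eq hN₁ hN₂ hA₁.1 hA₂.1
    (fun i => (hA₁.2 i).ne') hR
  exact ⟨rfl, rfl, rfl⟩

end Field

theorem exists_orthogonal_mul_upperTriangular [LocallyFiniteOrderBot ι] (X : Matrix ι ι ℝ)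
    (hX : IsUnit X) :
    ∃ Q R : Matrix ι ι ℝ, Qᵀ * Q = 1 ∧ R.IsUpperTriangular ∧ (∀ i, 0 < R i i) ∧ X = Q * R := by
  let f : ι → EuclideanSpace ℝ ι := fun j => WithLp.toLp 2 (X.col j)
  have hf : LinearIndependent ℝ f :=
    (linearIndependent_cols_iff_isUnit.2 hX).map' (WithLp.linearEquiv 2 ℝ (ι → ℝ)).symm.toLinearMap
      (WithLp.linearEquiv 2 ℝ (ι → ℝ)).symm.ker
  let b := gramSchmidtOrthonormalBasis finrank_euclideanSpace f
  refine ⟨of fun i j => b j i, of fun i j => inner ℝ (b i) (f j), ?_,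
    fun i j hij => gramSchmidtOrthonormalBasis_inv_triangular _ f hij, fun i => ?_, ?_⟩
  · ext i j
    simpa [mul_apply, PiLp.inner_apply, mul_comm, one_apply] using b.inner_eq_ite i j
  · rw [of_apply, gramSchmidtOrthonormalBasis_apply _
      (norm_ne_zero_iff.1 (by simp [gramSchmidtNormed_unit_length i hf]))]
    exact inner_gramSchmidtNormed_self_pos hf i
  · ext i j
    simpa [f, mul_apply, mul_comm] using congrArg (fun v => v i) (b.sum_repr' (f j)).symm

theorem exists_upperTriangular_mul_orthogonal [LocallyFiniteOrderTop ι] (g : Matrix ι ι ℝ)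
    (hg : IsUnit g) :
    ∃ R K : Matrix ι ι ℝ, R.IsUpperTriangular ∧ (∀ i, 0 < R i i) ∧ Kᵀ * K = 1 ∧ g = R * K := by
  -- QR decomposition of `gᵀ` for the reversed order of `ι`; `by exact` makes the unit hypothesis
  -- elaborate with the instances of `ιᵒᵈ` rather than those of `ι`.
  obtain ⟨Q, R, hQ, hR, hR_pos, h⟩ :=
    exists_orthogonal_mul_upperTriangular (ι := ιᵒᵈ) gᵀ (by exact (isUnit_transpose g).2 hg)
  have hQ' : Q * Qᵀ = 1 := mul_eq_one_comm.1 hQ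
  have h' := congrArg transpose h
  rw [transpose_mul] at h'
  exact ⟨Rᵀ, Qᵀ, fun i j hij => hR hij, hR_pos, hQ', h'⟩

theorem exists_iwasawa_decomposition [LocallyFiniteOrderTop ι] (g : Matrix ι ι ℝ)
    (hg : 0 < g.det) :
    ∃ N A K : Matrix ι ι ℝ, (N.IsUpperTriangular ∧ ∀ i, N i i = 1) ∧
      (A.IsDiag ∧ ∀ i, 0 < A i i) ∧ (Kᵀ * K = 1 ∧ K.det = 1) ∧ g = N * A * K := by
  obtain ⟨R, K, hR, hR_pos, hK, rfl⟩ :=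
    exists_upperTriangular_mul_orthogonal g ((isUnit_iff_isUnit_det g).2 hg.ne'.isUnit)
  obtain ⟨N, hN, hRN⟩ := hR.exists_unitriangular_mul_diagonal fun i => (hR_pos i).ne'
  have hR_det : 0 < R.det := by
    rw [det_of_isUpperTriangular hR]
    exact prod_pos fun i _ => hR_pos i
  have hK_det : 0 < K.det := by
    rw [det_mul] at hg
    exact pos_of_mul_pos_right hg hR_det.le
  exact ⟨N, diagonal R.diag, K, hN, ⟨isDiag_diagonal _, fun i => by simpa using hR_pos i⟩,
    ⟨hK, det_eq_one_of_transpose_mul_self_eq_one hK hK_det⟩, by rw [← hRN]⟩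

end Matrix

theorem stmt16 (n : ℕ) :
    (∀ g : Matrix (Fin n) (Fin n) ℝ, 0 < g.det →
      ∃! t : Matrix (Fin n) (Fin n) ℝ × Matrix (Fin n) (Fin n) ℝ
          × Matrix (Fin n) (Fin n) ℝ,
        ((∀ i j : Fin n, j < i → t.1 i j = 0) ∧ (∀ i : Fin n, t.1 i i = 1)) ∧
        ((∀ i j : Fin n, i ≠ j → t.2.1 i j = 0) ∧ (∀ i : Fin n, 0 < t.2.1 i i)) ∧
        (t.2.2ᵀ * t.2.2 = 1 ∧ t.2.2.det = 1) ∧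
        g = t.1 * t.2.1 * t.2.2) ∧
    (∀ g na a k : Matrix (Fin n) (Fin n) ℝ, g.det = 1 →
      ((∀ i j : Fin n, j < i → na i j = 0) ∧ (∀ i : Fin n, na i i = 1)) →
      ((∀ i j : Fin n, i ≠ j → a i j = 0) ∧ (∀ i : Fin n, 0 < a i i)) →
      (kᵀ * k = 1 ∧ k.det = 1) → g = na * a * k → a.det = 1) := by
  refine ⟨fun g hg => ?_, fun g na a k hg hna _ hk h => ?_⟩
  · obtain ⟨N, A, K, hN, hA, hK, rfl⟩ := exists_iwasawa_decomposition g hg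
    refine ⟨(N, A, K), ⟨hN, hA, hK, rfl⟩, ?_⟩
    rintro ⟨N', A', K'⟩ ⟨hN', hA', hK', h⟩
    obtain ⟨rfl, rfl, rfl⟩ := iwasawa_decomposition_unique hN' hA' hK'.1 hN hA hK.1 h.symm
    rfl
  · rw [h, det_mul, det_mul, det_of_isUpperTriangular hna.1, hk.2] at hg
    simpa [hna.2] using hg
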